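/- arXiv:2009.05410 — 2 statements merged into one kernel-verified Lean document; each statement's English description precedes it below -/
import Mathlib

section
/- Every positive fixed point of the Shepp–Vardi EM iteration is a global maximizer of the multinomial log-likelihood: suppose all entries of c are positive, and u* ∈ ℝ^J has all entries positive, satisfies Σ_{j=1}^J u*_j = C where C = Σ_{i=1}^I c_i, and fulfills the fixed-point (first-order optimality) condition Σ_{i=1}^I c_i p_{ij} / (Pu*)_i = 1 for every j. Then for every v ∈ ℝ^J with nonnegative entries, Σ_{j=1}^J v_j = C, and (Pv)_i > 0 for all i, one has Σ_{i=1}^I c_i log((Pv)_i) ≤ Σ_{i=1}^I c_i log((Pu*)_i). -/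
open Matrix BigOperators

/-- Every positive fixed point of the Shepp–Vardi EM iteration is a
global maximizer of the multinomial log-likelihood. -/
theorem em_fixed_point_is_global_max
    (I J : ℕ) (hI : 0 < I) (hJ : 0 < J)
    (P : Matrix (Fin I) (Fin J) ℝ) (hP : ∀ i j, 0 ≤ P i j)
    (c : Fin I → ℝ) (hc : ∀ i, 0 < c i)
    (C : ℝ) (hC : C = ∑ i, c i)
    (ustar : Fin J → ℝ) (hustar : ∀ j, 0 < ustar j)
    (hsum : ∑ j, ustar j = C)
    (hfix : ∀ j, ∑ i, c i * P i j / P.mulVec ustar i = 1) :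
    ∀ v : Fin J → ℝ, (∀ j, 0 ≤ v j) → (∑ j, v j = C) → (∀ i, 0 < P.mulVec v i) →
      ∑ i, c i * Real.log (P.mulVec v i) ≤ ∑ i, c i * Real.log (P.mulVec ustar i) := by
  intro v hv hvsum hPv
  -- Positivity of (P u*)_i whenever (P v)_i > 0
  have hWpos : ∀ i, 0 < P.mulVec ustar i := by
    intro i
    have hWnn : 0 ≤ P.mulVec ustar i := by
      rw [Matrix.mulVec, dotProduct]
      exact Finset.sum_nonneg fun j _ => mul_nonneg (hP i j) (hustar j).le
    by_contra hcon
    have hW0 : P.mulVec ustar i = 0 := le_antisymm (not_lt.mp hcon) hWnn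
    rw [Matrix.mulVec, dotProduct] at hW0
    have hzero : ∀ j, P i j = 0 := by
      intro j
      have h := (Finset.sum_eq_zero_iff_of_nonneg
        (fun j _ => mul_nonneg (hP i j) (hustar j).le)).mp hW0 j (Finset.mem_univ j)
      rcases mul_eq_zero.mp h with h | h
      · exact h
      · exact absurd h (hustar j).ne'
    have : P.mulVec v i = 0 := by
      simp [Matrix.mulVec, dotProduct, hzero]
    exact absurd this (hPv i).ne'
  -- key identity: ∑ i, c i * (P v)_i / (P u*)_i = C
  have key : ∑ i, c i * (P.mulVec v i) / P.mulVec ustar i = C := by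
    have h1 : ∀ i : Fin I, c i * (P.mulVec v i) / P.mulVec ustar i
        = ∑ j, (c i * P i j / P.mulVec ustar i) * v j := by
      intro i
      rw [Matrix.mulVec, dotProduct, Finset.mul_sum, Finset.sum_div]
      refine Finset.sum_congr rfl fun j _ => by ring
    rw [Finset.sum_congr rfl fun i _ => h1 i, Finset.sum_comm]
    have h2 : ∀ j : Fin J, ∑ i, (c i * P i j / P.mulVec ustar i) * v j = v j := by
      intro j
      rw [← Finset.sum_mul, hfix j, one_mul]
    rw [Finset.sum_congr rfl fun j _ => h2 j]
    exact hvsum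
  -- pointwise log bound
  have hlog : ∀ i : Fin I, c i * Real.log (P.mulVec v i) - c i * Real.log (P.mulVec ustar i)
      ≤ c i * (P.mulVec v i) / P.mulVec ustar i - c i := by
    intro i
    have h1 : Real.log (P.mulVec v i) - Real.log (P.mulVec ustar i)
        = Real.log (P.mulVec v i / P.mulVec ustar i) :=
      (Real.log_div (hPv i).ne' (hWpos i).ne').symm
    have h2 : Real.log (P.mulVec v i / P.mulVec ustar i)
        ≤ P.mulVec v i / P.mulVec ustar i - 1 :=
      Real.log_le_sub_one_of_pos (div_pos (hPv i) (hWpos i))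
    calc c i * Real.log (P.mulVec v i) - c i * Real.log (P.mulVec ustar i)
        = c i * (Real.log (P.mulVec v i) - Real.log (P.mulVec ustar i)) := by ring
      _ = c i * Real.log (P.mulVec v i / P.mulVec ustar i) := by rw [h1]
      _ ≤ c i * (P.mulVec v i / P.mulVec ustar i - 1) :=
          mul_le_mul_of_nonneg_left h2 (hc i).le
      _ = c i * (P.mulVec v i) / P.mulVec ustar i - c i := by ring
  have hsumle : ∑ i, (c i * Real.log (P.mulVec v i) - c i * Real.log (P.mulVec ustar i))
      ≤ ∑ i, (c i * (P.mulVec v i) / P.mulVec ustar i - c i) :=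
    Finset.sum_le_sum fun i _ => hlog i
  rw [Finset.sum_sub_distrib, Finset.sum_sub_distrib, key, ← hC] at hsumle
  linarith
end

section
/- Every point of the Maximum Likelihood Bounded Subspace is a global maximizer of the multinomial log-likelihood: suppose P is column-stochastic, i.e. Σ_{i=1}^I p_{ij} = 1 for every j, all entries of c are positive with C = Σ_{i=1}^I c_i, and u ∈ ℝ^J has nonnegative entries with Pu = c. Then for every v ∈ ℝ^J with nonnegative entries, Σ_{j=1}^J v_j = C, and (Pv)_i > 0 for all i, one has Σ_{i=1}^I c_i log((Pv)_i) ≤ Σ_{i=1}^I c_i log(c_i) = Σ_{i=1}^I c_i log((Pu)_i). -/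
open Matrix BigOperators

/-- Every point of the MLBS is a global maximizer of the multinomial
log-likelihood. -/
theorem mlbs_is_global_max
    (I J : ℕ) (hI : 0 < I) (hJ : 0 < J)
    (P : Matrix (Fin I) (Fin J) ℝ) (hP : ∀ i j, 0 ≤ P i j)
    (hstoch : ∀ j, ∑ i, P i j = 1)
    (c : Fin I → ℝ) (hc : ∀ i, 0 < c i)
    (C : ℝ) (hC : C = ∑ i, c i)
    (u : Fin J → ℝ) (hu : ∀ j, 0 ≤ u j)
    (hPu : P.mulVec u = c) :
    ∀ v : Fin J → ℝ, (∀ j, 0 ≤ v j) → (∑ j, v j = C) → (∀ i, 0 < P.mulVec v i) →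
      (∑ i, c i * Real.log (P.mulVec v i) ≤ ∑ i, c i * Real.log (c i) ∧
       ∑ i, c i * Real.log (c i) = ∑ i, c i * Real.log (P.mulVec u i)) := by
  intro v hv hsum hPv
  constructor
  · -- Gibbs inequality
    have hsumPv : ∑ i, P.mulVec v i = C := by
      simp only [Matrix.mulVec, dotProduct]
      rw [Finset.sum_comm]
      calc ∑ j, ∑ i, P i j * v j = ∑ j, (∑ i, P i j) * v j := by
            exact Finset.sum_congr rfl fun j _ => (Finset.sum_mul ..).symm
        _ = ∑ j, v j := by simp [hstoch]
        _ = C := hsum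
    have key : ∑ i, c i * Real.log (P.mulVec v i) - ∑ i, c i * Real.log (c i) ≤ 0 := by
      rw [← Finset.sum_sub_distrib]
      have : ∀ i ∈ Finset.univ, c i * Real.log (P.mulVec v i) - c i * Real.log (c i)
          ≤ P.mulVec v i - c i := by
        intro i _
        have h1 : Real.log (P.mulVec v i / c i) ≤ P.mulVec v i / c i - 1 :=
          Real.log_le_sub_one_of_pos (div_pos (hPv i) (hc i))
        have h2 := mul_le_mul_of_nonneg_left h1 (hc i).le
        rw [Real.log_div (hPv i).ne' (hc i).ne'] at h2
        calc c i * Real.log (P.mulVec v i) - c i * Real.log (c i)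
            = c i * (Real.log (P.mulVec v i) - Real.log (c i)) := by ring
          _ ≤ c i * (P.mulVec v i / c i - 1) := h2
          _ = P.mulVec v i - c i := by rw [mul_sub, mul_one, mul_div_cancel₀ _ (hc i).ne']
      calc ∑ i, (c i * Real.log (P.mulVec v i) - c i * Real.log (c i))
          ≤ ∑ i, (P.mulVec v i - c i) := Finset.sum_le_sum this
        _ = 0 := by rw [Finset.sum_sub_distrib, hsumPv, hC, sub_self]
    linarith
  · rw [hPu]
end
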